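/- Setting x = 1 in the weighted count recovers the naive count: P(n,a)(1) = a(a+n)^{n-1} for a ≥ 1, n ≥ 1. -/

import Mathlib

/-- The weakly increasing sorted version of a vector of naturals. -/
def sortPF {n : ℕ} (p : Fin n → ℕ) : List ℕ :=
  Multiset.sort (↑(List.ofFn p)) (· ≤ ·)

/-- `p` is an `a`-parking function of length `n`: all entries are positive and the
`i`-th entry (0-based) of the sorted version is at most `a + i` (i.e. `a + i - 1` 1-based). -/
def IsAPF (a : ℕ) {n : ℕ} (p : Fin n → ℕ) : Prop :=
  (∀ i, 1 ≤ p i) ∧ ∀ i : Fin n, (sortPF p).getD i 0 ≤ a + (i : ℕ)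

/-- `p` is an ordinary parking function of length `n`. -/
def IsPF {n : ℕ} (p : Fin n → ℕ) : Prop :=
  (∀ i, 1 ≤ p i ∧ p i ≤ n) ∧ ∀ i : Fin n, (sortPF p).getD i 0 ≤ (i : ℕ) + 1

instance (a n : ℕ) : DecidablePred (fun p : Fin n → ℕ => IsAPF a p) :=
  fun p => decidable_of_iff
    ((∀ i, 1 ≤ p i) ∧ ∀ i : Fin n, (sortPF p).getD i 0 ≤ a + (i : ℕ)) Iff.rfl

/-- The (finite) set of all `a`-parking functions of length `n`. -/
def pfFinset (a n : ℕ) : Finset (Fin n → ℕ) :=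
  (Fintype.piFinset fun _ => Finset.Icc 1 (a + n)).filter (fun p => IsAPF a p)

/-- The generating polynomial of `a`-parking functions of length `n` by sum. -/
noncomputable def Ppoly (a n : ℕ) : Polynomial ℚ :=
  ∑ p ∈ pfFinset a n, Polynomial.X ^ (∑ i, p i)

/-!
Pollak's circular argument. Evaluating at `1` counts `a`-parking functions. Shift the entries down
by one and read them in `ZMod (a + n)`: among the `a + n` translates `q - c` of any vector `q`,
exactly `a` are parking functions, so double counting gives `(a + n) · #PF = a · (a + n) ^ n`.

For the translates, let `W s` be the number of entries of `q` among the residues of `0, …, s - 1`,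
minus `s`. Then `W` falls by at most one per step and by `a` per period `a + n`, and `q - d` is an
`a`-parking function iff `W (d + a + n)` is a strict new minimum of `W`. A walk descending in unit
steps sets one new minimum per unit of descent, hence `a` of them per period.
-/

open Finset

theorem List.Pairwise.getD_le_iff_lt_countP {α : Type*} [LinearOrder α] {L : List α}
    (hL : L.Pairwise (· ≤ ·)) {i : ℕ} (hi : i < L.length) (x₀ v : α) :
    L.getD i x₀ ≤ v ↔ i < L.countP (· ≤ v) := by
  induction L generalizing i with
  | nil => simp at hi
  | cons x L ih =>
    rw [List.pairwise_cons] at hL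
    by_cases hx : x ≤ v
    · cases i with
      | zero => simp [hx]
      | succ i => simpa [hx] using ih hL.2 (by simpa using hi)
    · have hzero : L.countP (· ≤ v) = 0 := List.countP_eq_zero.2 fun y hy => by
        simpa using lt_of_lt_of_le (not_le.1 hx) (hL.1 y hy)
      cases i with
      | zero => simp [hx, hzero]
      | succ i =>
        have hi : i < L.length := by simpa using hi
        rw [List.getD_cons_succ, List.getD_eq_getElem _ _ hi,
          List.countP_cons_of_neg (by simpa using hx), hzero]
        simpa using lt_of_lt_of_le (not_le.1 hx) (hL.1 _ (List.getElem_mem hi))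

theorem countP_sortPF {n : ℕ} (p : Fin n → ℕ) (v : ℕ) :
    (sortPF p).countP (· ≤ v) = #{j | p j ≤ v} := by
  rw [← Multiset.coe_countP, sortPF, Multiset.sort_eq, ← Fin.univ_val_map, Multiset.countP_map]
  rfl

theorem isAPF_iff_lt_card (a : ℕ) {n : ℕ} (p : Fin n → ℕ) :
    IsAPF a p ↔ (∀ i, 1 ≤ p i) ∧ ∀ i : Fin n, (i : ℕ) < #{j | p j ≤ a + i} := by
  have hlen : (sortPF p).length = n := by simp [sortPF]
  have hsort : (sortPF p).Pairwise (· ≤ ·) := Multiset.pairwise_sort _ _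
  refine and_congr_right fun _ => forall_congr' fun i => ?_
  rw [hsort.getD_le_iff_lt_countP (hlen.symm ▸ i.isLt), countP_sortPF]

section RunningMinimum

variable {T : ℕ → ℤ}

def runMin (T : ℕ → ℤ) (e : ℕ) : ℤ :=
  (range (e + 1)).inf' nonempty_range_add_one T

theorem le_runMin_iff {x : ℤ} {e : ℕ} : x ≤ runMin T e ↔ ∀ u ≤ e, x ≤ T u := by
  simp [runMin]

theorem lt_runMin_iff {x : ℤ} {e : ℕ} : x < runMin T e ↔ ∀ u ≤ e, x < T u := by
  simp [runMin]

theorem runMin_le {u e : ℕ} (h : u ≤ e) : runMin T e ≤ T u :=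
  le_runMin_iff.1 le_rfl u h

theorem exists_runMin_eq (e : ℕ) : ∃ u ≤ e, runMin T e = T u := by
  obtain ⟨u, hu, h⟩ := exists_mem_eq_inf' nonempty_range_add_one T
  exact ⟨u, Nat.lt_succ_iff.1 (mem_range.1 hu), h⟩

theorem runMin_succ (e : ℕ) : runMin T (e + 1) = min (runMin T e) (T (e + 1)) := by
  simp [runMin, range_add_one, inf'_insert, min_comm]

theorem sub_le_add_of_step (hstep : ∀ s, T s - 1 ≤ T (s + 1)) (s k : ℕ) :
    T s - k ≤ T (s + k) := by
  induction k with
  | zero => simp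
  | succ k ih => have := hstep (s + k); rw [← add_assoc]; push_cast; omega

/-- A walk that never falls by more than one sets a new minimum exactly when its running minimum
drops, and then by exactly one. -/
theorem card_newMin (hstep : ∀ s, T s - 1 ≤ T (s + 1)) (e k : ℕ) :
    (#{d ∈ range k | T (e + d + 1) < runMin T (e + d)} : ℤ) =
      runMin T e - runMin T (e + k) := by
  have htele := sum_range_sub' (fun d => runMin T (e + d)) k
  rw [add_zero] at htele
  rw [card_filter, Nat.cast_sum, ← htele]
  refine sum_congr rfl fun d _ => ?_
  have := runMin_le (T := T) (le_refl (e + d))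
  have := hstep (e + d)
  rw [← add_assoc, runMin_succ]
  split_ifs with h <;> omega

variable {m a : ℕ}

theorem runMin_add_period (hper : ∀ s, T (s + m) = T s - a) {e : ℕ} (he : m ≤ e + 1) :
    runMin T (e + m) = runMin T e - a := by
  refine le_antisymm ?_ (le_runMin_iff.2 fun u hu => ?_)
  · obtain ⟨u, hu, h⟩ := exists_runMin_eq (T := T) e
    exact h ▸ hper u ▸ runMin_le (by omega)
  · rcases lt_or_ge u m with hum | hum
    · have := runMin_le (T := T) (show u ≤ e by omega); omega
    · have := hper (u - m); rw [Nat.sub_add_cancel hum] at this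
      have := runMin_le (T := T) (show u - m ≤ e by omega); omega

/-- In one period the walk falls by `a` in unit steps, so it sets exactly `a` new minima. -/
theorem card_newMin_period (hstep : ∀ s, T s - 1 ≤ T (s + 1))
    (hper : ∀ s, T (s + m) = T s - a) :
    #{d ∈ range m | ∀ u < d + m, T (d + m) < T u} = a := by
  cases m with
  | zero =>
    have := hper 0
    simp only [add_zero, range_zero, filter_empty, card_empty] at this ⊢
    omega
  | succ k =>
    have hnew (d : ℕ) :
        (∀ u < d + (k + 1), T (d + (k + 1)) < T u) ↔ T (k + d + 1) < runMin T (k + d) := by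
      rw [lt_runMin_iff, show d + (k + 1) = k + d + 1 by omega]
      simp
    have := card_newMin hstep k (k + 1)
    rw [runMin_add_period hper le_rfl, ← filter_congr fun d _ => hnew d] at this
    omega

/-- Before `d + a` the walk cannot yet have fallen to `T d - a = T (d + m)`; before `d`, use the
period. -/
theorem forall_lt_iff_of_window (hstep : ∀ s, T s - 1 ≤ T (s + 1))
    (hper : ∀ s, T (s + m) = T s - a) (ha : 0 < a) {d : ℕ} (hd : d < m) :
    (∀ u, d + a ≤ u → u < d + m → T (d + m) < T u) ↔ ∀ u < d + m, T (d + m) < T u := by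
  refine ⟨fun h => ?_, fun h u _ hu => h u hu⟩
  have hwindow : ∀ u, d ≤ u → u < d + m → T (d + m) < T u := fun u hdu hu => by
    rcases lt_or_ge u (d + a) with hua | hua
    · have := sub_le_add_of_step hstep d (u - d)
      rw [Nat.add_sub_cancel' hdu] at this
      have := hper d; omega
    · exact h u hua hu
  intro u hu
  rcases le_or_gt d u with hdu | hud
  · exact hwindow u hdu hu
  · have := hper u; have := hwindow (u + m) (by omega) (by omega); omega

end RunningMinimum

section Walk

variable {n m : ℕ} [NeZero m] (q : Fin n → ZMod m)

def walk (s : ℕ) : ℤ :=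
  ∑ t ∈ range s, (#{j | q j = t} : ℤ) - s

theorem card_val_sub_lt (d : ℕ) {k : ℕ} (hk : k ≤ m) :
    #{j | (q j - d).val < k} = ∑ t ∈ range k, #{j | q j = ((d + t : ℕ) : ZMod m)} := by
  have := sum_card_fiberwise_eq_card_filter univ (range k) fun j => (q j - d).val
  simp only [mem_range] at this
  rw [← this]
  refine sum_congr rfl fun t ht => congrArg card (filter_congr fun j _ => ?_)
  have ht : t < m := (mem_range.1 ht).trans_le hk
  rw [(ZMod.val_injective m).eq_iff' (ZMod.val_cast_of_lt ht), sub_eq_iff_eq_add', Nat.cast_add]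

theorem walk_add (d : ℕ) {k : ℕ} (hk : k ≤ m) :
    walk q (d + k) = walk q d + #{j | (q j - d).val < k} - k := by
  rw [walk, walk, sum_range_add, card_val_sub_lt q d hk]
  push_cast
  ring

theorem walk_sub_one_le (s : ℕ) : walk q s - 1 ≤ walk q (s + 1) := by
  rw [walk_add q s NeZero.one_le]
  push_cast
  omega

theorem walk_add_modulus (s : ℕ) : walk q (s + m) = walk q s + n - m := by
  rw [walk_add q s le_rfl]
  simp [ZMod.val_lt]

end Walk

theorem walk_add_period {a n : ℕ} [NeZero (a + n)] (q : Fin n → ZMod (a + n)) (s : ℕ) :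
    walk q (s + (a + n)) = walk q s - a := by
  rw [walk_add_modulus]
  push_cast
  ring

theorem isAPF_sub_iff {a n : ℕ} [NeZero (a + n)] (ha : 0 < a) (q : Fin n → ZMod (a + n))
    {d : ℕ} (hd : d < a + n) : IsAPF a (fun i => (q i - d).val + 1) ↔
      ∀ u < d + (a + n), walk q (d + (a + n)) < walk q u := by
  rw [isAPF_iff_lt_card, ← forall_lt_iff_of_window (walk_sub_one_le q) (walk_add_period q) ha hd]
  simp only [Nat.add_one_le_iff, Nat.zero_lt_succ, implies_true, true_and]
  have hwalk : ∀ i < n,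
      i < #{j | (q j - d).val < a + i} ↔ walk q (d + (a + n)) < walk q (d + (a + i)) := by
    intro i hi
    have := walk_add q d (k := a + i) (by omega)
    have := walk_add_period q d
    constructor <;> intro <;> omega
  constructor
  · intro h u hu hu'
    have := (hwalk (u - d - a) (by omega)).1 (h ⟨u - d - a, by omega⟩)
    rwa [show d + (a + (u - d - a)) = u by omega] at this
  · exact fun h i => (hwalk i i.isLt).2 (h _ (by omega) (by omega))

theorem card_filter_zmod_eq_card_filter_range {m : ℕ} [NeZero m] (P : ZMod m → Prop)
    [DecidablePred P] :
    #{c | P c} = #{d ∈ range m | P ((d : ℕ) : ZMod m)} := by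
  refine card_nbij' ZMod.val (fun d => (d : ZMod m)) ?_ ?_ ?_ ?_
  · intro c hc
    simpa [ZMod.val_lt] using hc
  · intro d hd
    simp only [coe_filter, mem_range] at hd
    simpa using hd.2
  · intro c _
    simp
  · intro d hd
    simp only [coe_filter, mem_range] at hd
    exact ZMod.val_cast_of_lt hd.1

theorem card_isAPF_sub {a n : ℕ} [NeZero (a + n)] (ha : 0 < a) (q : Fin n → ZMod (a + n)) :
    #{c | IsAPF a fun i => (q i - c).val + 1} = a := by
  rw [card_filter_zmod_eq_card_filter_range,
    filter_congr fun d hd => isAPF_sub_iff ha q (mem_range.1 hd)]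
  exact card_newMin_period (walk_sub_one_le q) (walk_add_period q)

theorem card_mul_card_filter_of_card_translates {ι G : Type*} [Fintype ι] [DecidableEq ι]
    [AddGroup G] [Fintype G] [DecidableEq G] (P : (ι → G) → Prop) [DecidablePred P] {a : ℕ}
    (h : ∀ q, #{c | P (q - fun _ => c)} = a) :
    Fintype.card G * #{q | P q} = a * Fintype.card G ^ Fintype.card ι := by
  have htranslate : ∀ c : G, #{q | P (q - fun _ => c)} = #{q | P q} := fun c => by
    simpa only [card_filter, Equiv.subRight_apply] using
      Equiv.sum_comp (Equiv.subRight fun _ => c) fun q => if P q then 1 else 0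
  calc Fintype.card G * #{q | P q}
      = ∑ c : G, #{q | P (q - fun _ => c)} := by simp [htranslate]
    _ = ∑ q : ι → G, #{c | P (q - fun _ => c)} := by simp only [card_filter]; exact sum_comm
    _ = a * Fintype.card G ^ Fintype.card ι := by simp [h, mul_comm]

theorem card_filter_piFinset_Icc {ι : Type*} [Fintype ι] [DecidableEq ι] (m : ℕ) [NeZero m]
    (P : (ι → ℕ) → Prop) [DecidablePred P] :
    #{p ∈ Fintype.piFinset fun _ => Icc 1 m | P p} =
      #{q : ι → ZMod m | P fun i => (q i).val + 1} := by
  have hleft : ∀ p ∈ Fintype.piFinset fun _ : ι => Icc 1 m,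
      (fun i => ((p i - 1 : ℕ) : ZMod m).val + 1) = p := fun p hp => funext fun i => by
    have := mem_Icc.1 (Fintype.mem_piFinset.1 hp i)
    rw [ZMod.val_cast_of_lt (by omega)]
    omega
  refine card_nbij' (fun p i => ((p i - 1 : ℕ) : ZMod m)) (fun q i => (q i).val + 1)
    (fun p hp => ?_) (fun q hq => ?_) (fun p hp => hleft p (mem_filter.1 hp).1) (fun q _ => ?_)
  · rw [mem_coe, mem_filter] at hp
    simp only [mem_coe, mem_filter, mem_univ, true_and]
    rw [hleft p hp.1]
    exact hp.2
  · rw [mem_coe, mem_filter] at hq ⊢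
    exact ⟨Fintype.mem_piFinset.2 fun i => mem_Icc.2 ⟨Nat.le_add_left 1 _, ZMod.val_lt (q i)⟩,
      hq.2⟩
  · simp

theorem card_pfFinset {a n : ℕ} (ha : 0 < a) (hn : 0 < n) :
    #(pfFinset a n) = a * (a + n) ^ (n - 1) := by
  have : NeZero (a + n) := ⟨by omega⟩
  have hdouble := card_mul_card_filter_of_card_translates
    (fun q : Fin n → ZMod (a + n) => IsAPF a fun i => (q i).val + 1) (card_isAPF_sub ha)
  rw [ZMod.card, Fintype.card_fin] at hdouble
  rw [pfFinset, card_filter_piFinset_Icc]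
  refine Nat.eq_of_mul_eq_mul_left (by omega : 0 < a + n) ?_
  rw [hdouble, ← Nat.sub_add_cancel hn, pow_succ, Nat.add_sub_cancel]
  ring

theorem Ppoly_eval_one (a n : ℕ) (ha : 1 ≤ a) (hn : 1 ≤ n) :
    (Ppoly a n).eval 1 = (a : ℚ) * ((a : ℚ) + (n : ℚ)) ^ (n - 1) := by
  have hcount : (Ppoly a n).eval 1 = #(pfFinset a n) := by
    simp [Ppoly, Polynomial.eval_finsetSum]
  rw [hcount, card_pfFinset ha hn, Nat.cast_mul, Nat.cast_pow, Nat.cast_add]
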